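/- In the reverse second-price auction game, selecting compute level θ*_i = argmax_{θ∈Θ}(q_i(θ) − c_i(θ)) together with price p_i = c_i(θ*_i) is a dominant strategy for provider i: this bid yields utility at least as high as any other bid (θ_i, p_i), regardless of the other providers' bids. -/

import Mathlib

/-!
Let `R` be the highest value `q_j(θ_j) − p_j` offered by a rival of provider `i`; it does not
depend on `i`'s bid. The winner's payment is its quality minus the runner-up's value, so `i`'s
utility is `(q_i − c_i)(θ_i) − R` if `i` wins and `0` otherwise; any bid therefore earns at most
`max((q_i − c_i)(θ_i) − R, 0) ≤ max((q_i − c_i)(θ*) − R, 0)`. Bidding `(θ*, c_i(θ*))` makes `i`'s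
offered value equal to its maximal surplus, so `i` wins when `(q_i − c_i)(θ*) > R`, loses when it
is `< R`, and earns exactly that bound.
-/

open scoped Classical

/-- Index of a provider achieving the highest value among `v : Fin N → ℝ`. -/
noncomputable def winIdx (N : ℕ) (hN : 0 < N) (v : Fin N → ℝ) : Fin N :=
  Classical.choose (Finset.exists_max_image (Finset.univ : Finset (Fin N)) v
    ⟨⟨0, hN⟩, Finset.mem_univ _⟩)

/-- Index of a provider achieving the highest value among the remaining providers. -/
noncomputable def secondIdx (N : ℕ) (hN : 2 ≤ N) (v : Fin N → ℝ) : Fin N :=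
  Classical.choose (Finset.exists_max_image
    ((Finset.univ : Finset (Fin N)).erase (winIdx N (by omega) v)) v
    (Finset.card_pos.mp (by
      rw [Finset.card_erase_of_mem (Finset.mem_univ _), Finset.card_univ, Fintype.card_fin]
      omega)))

/-- Utility of provider `i` in the reverse second-price auction: with offered values
`V_j = q_j(θ_j) − p_j`, the winner `π(1)` (highest value) receives the payment
`P = q_{π(1)}(θ_{π(1)}) − V_{π(2)}` minus their generation cost; all others receive `0`. -/
noncomputable def auctionU (N : ℕ) (hN : 2 ≤ N) (Θ : Type*) (q c : Fin N → Θ → ℝ)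
    (θv : Fin N → Θ) (pr : Fin N → ℝ) (i : Fin N) : ℝ :=
  let v : Fin N → ℝ := fun j => q j (θv j) - pr j
  let w := winIdx N (by omega) v
  let s := secondIdx N hN v
  if i = w then (q w (θv w) - (q s (θv s) - pr s)) - c i (θv i) else 0

lemma univ_erase_nonempty {N : ℕ} (hN : 2 ≤ N) (i : Fin N) : (Finset.univ.erase i).Nonempty :=
  haveI := Fin.nontrivial_iff_two_le.mpr hN
  (Finset.univ_nontrivial_iff.mpr ‹_›).erase_nonempty

lemma winIdx_max (N : ℕ) (hN : 0 < N) (v : Fin N → ℝ) (j : Fin N) :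
    v j ≤ v (winIdx N hN v) :=
  (Classical.choose_spec (Finset.exists_max_image (Finset.univ : Finset (Fin N)) v
    ⟨⟨0, hN⟩, Finset.mem_univ _⟩)).2 j (Finset.mem_univ _)

lemma secondIdx_spec (N : ℕ) (hN : 2 ≤ N) (v : Fin N → ℝ) :
    secondIdx N hN v ∈ Finset.univ.erase (winIdx N (by omega) v) ∧
      ∀ j ∈ Finset.univ.erase (winIdx N (by omega) v), v j ≤ v (secondIdx N hN v) :=
  Classical.choose_spec (Finset.exists_max_image _ v (univ_erase_nonempty hN _))

lemma secondIdx_ne_winIdx (N : ℕ) (hN : 2 ≤ N) (v : Fin N → ℝ) :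
    secondIdx N hN v ≠ winIdx N (by omega) v :=
  Finset.ne_of_mem_erase (secondIdx_spec N hN v).1

lemma secondIdx_max (N : ℕ) (hN : 2 ≤ N) (v : Fin N → ℝ) (j : Fin N)
    (hj : j ≠ winIdx N (by omega) v) : v j ≤ v (secondIdx N hN v) :=
  (secondIdx_spec N hN v).2 j (Finset.mem_erase.mpr ⟨hj, Finset.mem_univ _⟩)

def offeredValue {N : ℕ} {Θ : Type*} (q : Fin N → Θ → ℝ) (θv : Fin N → Θ) (pr : Fin N → ℝ)
    (j : Fin N) : ℝ :=
  q j (θv j) - pr j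

section BestRival

variable {N : ℕ} (hN : 2 ≤ N)

noncomputable def bestRival (v : Fin N → ℝ) (i : Fin N) : ℝ :=
  (Finset.univ.erase i).sup' (univ_erase_nonempty hN i) v

lemma le_bestRival {v : Fin N → ℝ} {i j : Fin N} (hj : j ≠ i) : v j ≤ bestRival hN v i :=
  Finset.le_sup' v (Finset.mem_erase.mpr ⟨hj, Finset.mem_univ j⟩)

lemma bestRival_congr {v v' : Fin N → ℝ} {i : Fin N} (h : ∀ j, j ≠ i → v j = v' j) :
    bestRival hN v i = bestRival hN v' i :=
  Finset.sup'_congr _ rfl fun j hj => h j (Finset.ne_of_mem_erase hj)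

lemma value_secondIdx_eq_bestRival {v : Fin N → ℝ} {i : Fin N}
    (hi : i = winIdx N (by omega) v) : v (secondIdx N hN v) = bestRival hN v i := by
  have hs : secondIdx N hN v ≠ i := hi ▸ secondIdx_ne_winIdx N hN v
  refine le_antisymm (le_bestRival hN hs) (Finset.sup'_le _ _ fun j hj => ?_)
  exact secondIdx_max N hN v j (hi ▸ Finset.ne_of_mem_erase hj)

lemma bestRival_le_of_eq_winIdx {v : Fin N → ℝ} {i : Fin N}
    (hi : i = winIdx N (by omega) v) : bestRival hN v i ≤ v i := by
  rw [← value_secondIdx_eq_bestRival hN hi]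
  exact hi ▸ winIdx_max N (by omega) v _

lemma le_bestRival_of_ne_winIdx {v : Fin N → ℝ} {i : Fin N}
    (hi : i ≠ winIdx N (by omega) v) : v i ≤ bestRival hN v i :=
  (winIdx_max N (by omega) v i).trans (le_bestRival hN (Ne.symm hi))

end BestRival

section Utility

variable {N : ℕ} (hN : 2 ≤ N) {Θ : Type*} (q c : Fin N → Θ → ℝ) (θv : Fin N → Θ)
  (pr : Fin N → ℝ) (i : Fin N)

lemma auctionU_eq :
    auctionU N hN Θ q c θv pr i =
      if i = winIdx N (by omega) (offeredValue q θv pr) then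
        q i (θv i) - c i (θv i) - bestRival hN (offeredValue q θv pr) i
      else 0 := by
  set v := offeredValue q θv pr
  change (if i = winIdx N (by omega) v then
    q (winIdx N (by omega) v) (θv (winIdx N (by omega) v)) - v (secondIdx N hN v) - c i (θv i)
    else 0) = _
  split_ifs with hi
  · rw [← value_secondIdx_eq_bestRival hN hi, ← hi]
    ring
  · rfl

lemma auctionU_le :
    auctionU N hN Θ q c θv pr i ≤
      max (q i (θv i) - c i (θv i) - bestRival hN (offeredValue q θv pr) i) 0 := by
  rw [auctionU_eq]
  split_ifs
  exacts [le_max_left _ _, le_max_right _ _]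

lemma auctionU_of_cost_bid (hpr : pr i = c i (θv i)) :
    auctionU N hN Θ q c θv pr i =
      max (q i (θv i) - c i (θv i) - bestRival hN (offeredValue q θv pr) i) 0 := by
  have hv : offeredValue q θv pr i = q i (θv i) - c i (θv i) := by rw [offeredValue, hpr]
  rw [auctionU_eq]
  split_ifs with hi
  · have := bestRival_le_of_eq_winIdx hN hi
    rw [max_eq_left (by linarith)]
  · have := le_bestRival_of_ne_winIdx hN hi
    rw [max_eq_right (by linarith)]

lemma bestRival_update (t : Θ) (p : ℝ) :
    bestRival hN (offeredValue q (Function.update θv i t) (Function.update pr i p)) i =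
      bestRival hN (offeredValue q θv pr) i :=
  bestRival_congr hN fun j hj => by
    simp only [offeredValue, Function.update_of_ne hj]

end Utility

theorem dominant_strategy_auction_general (N : ℕ) (hN : 2 ≤ N) (Θ : Type*)
    (q c : Fin N → Θ → ℝ)
    (i : Fin N) (θstar : Θ)
    (hstar : ∀ t : Θ, q i t - c i t ≤ q i θstar - c i θstar)
    (θv : Fin N → Θ) (pr : Fin N → ℝ)
    (θi' : Θ) (pi' : ℝ) :
    auctionU N hN Θ q c (Function.update θv i θi') (Function.update pr i pi') i
      ≤ auctionU N hN Θ q c (Function.update θv i θstar)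
          (Function.update pr i (c i θstar)) i := by
  set R := bestRival hN (offeredValue q θv pr) i
  calc auctionU N hN Θ q c (Function.update θv i θi') (Function.update pr i pi') i
      ≤ max (q i θi' - c i θi' - R) 0 := by
        simpa only [Function.update_self, bestRival_update] using
          auctionU_le hN q c (Function.update θv i θi') (Function.update pr i pi') i
    _ ≤ max (q i θstar - c i θstar - R) 0 := max_le_max (sub_le_sub_right (hstar θi') R) le_rfl
    _ = auctionU N hN Θ q c (Function.update θv i θstar)
          (Function.update pr i (c i θstar)) i := by
        simpa only [Function.update_self, bestRival_update] using
          (auctionU_of_cost_bid hN q c (Function.update θv i θstar)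
            (Function.update pr i (c i θstar)) i (by simp only [Function.update_self])).symm

/-- **The welfare-maximizing compute with cost bidding is a dominant strategy.** In the
reverse second-price auction, if `θ*` maximizes `q_i(θ) − c_i(θ)` over `Θ`, then bidding
`(θ*, c_i(θ*))` yields utility at least as high as any other bid `(θᵢ', pᵢ')`, regardless
of the other providers' bids (assuming no ties in offered values in either bid profile). -/
theorem dominant_strategy_auction (N : ℕ) (hN : 2 ≤ N) (Θ : Type*) [Fintype Θ]
    (q c : Fin N → Θ → ℝ)
    (hq : ∀ i t, 0 ≤ q i t) (hc : ∀ i t, 0 ≤ c i t)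
    (i : Fin N) (θstar : Θ)
    (hstar : ∀ t : Θ, q i t - c i t ≤ q i θstar - c i θstar)
    (θv : Fin N → Θ) (pr : Fin N → ℝ) (hpr : ∀ j, 0 ≤ pr j)
    (θi' : Θ) (pi' : ℝ) (hpi' : 0 ≤ pi')
    (hinj₁ : Function.Injective (fun j =>
      q j (Function.update θv i θstar j) - Function.update pr i (c i θstar) j))
    (hinj₂ : Function.Injective (fun j =>
      q j (Function.update θv i θi' j) - Function.update pr i pi' j)) :
    auctionU N hN Θ q c (Function.update θv i θi') (Function.update pr i pi') i
      ≤ auctionU N hN Θ q c (Function.update θv i θstar)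
          (Function.update pr i (c i θstar)) i :=
  dominant_strategy_auction_general N hN Θ q c i θstar hstar θv pr θi' pi'
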